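/- arXiv:2304.01327 — 2 statements merged into one kernel-verified Lean document; each statement's English description precedes it below -/
import Mathlib

section
/- A map T : H^∞(𝔻) → H^∞(𝔻) is an automorphism if and only if there exists a conformal automorphism τ of the open unit disc 𝔻 (a bijective holomorphic self-map of 𝔻) such that Tf = f ∘ τ for all f ∈ H^∞(𝔻). -/
open Set Metric Complex MeasureTheory Filter
open Topology

noncomputable section

/-- The open unit disc in `ℂ`. -/
def D : Set ℂ := Metric.ball (0 : ℂ) 1

/-- `H^∞(𝔻)`: bounded analytic functions on the open unit disc.  Functions are represented by
their values on `ℂ`; only the values on `D` are relevant, and two representatives are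
identified when they agree on `D`. -/
def Hinf : Set (ℂ → ℂ) :=
  {f | DifferentiableOn ℂ f D ∧ ∃ C : ℝ, ∀ z ∈ D, ‖f z‖ ≤ C}

lemma D_open : IsOpen D := isOpen_ball
lemma D_conn : IsPreconnected D := (convex_ball (0:ℂ) 1).isPreconnected
lemma zero_mem_D : (0:ℂ) ∈ D := by simp [D]

lemma Hinf_add {f g : ℂ → ℂ} (hf : f ∈ Hinf) (hg : g ∈ Hinf) : f + g ∈ Hinf := by
  obtain ⟨hfd, C, hC⟩ := hf; obtain ⟨hgd, C', hC'⟩ := hg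
  exact ⟨hfd.add hgd, C + C', fun z hz => (norm_add_le _ _).trans
    (add_le_add (hC z hz) (hC' z hz))⟩

lemma Hinf_mul {f g : ℂ → ℂ} (hf : f ∈ Hinf) (hg : g ∈ Hinf) : f * g ∈ Hinf := by
  obtain ⟨hfd, C, hC⟩ := hf; obtain ⟨hgd, C', hC'⟩ := hg
  refine ⟨hfd.mul hgd, C * C', fun z hz => ?_⟩
  rw [Pi.mul_apply, norm_mul]
  have h0 : (0:ℝ) ≤ C := le_trans (norm_nonneg _) (hC 0 zero_mem_D)
  exact mul_le_mul (hC z hz) (hC' z hz) (norm_nonneg _) h0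

lemma Hinf_smul (c : ℂ) {f : ℂ → ℂ} (hf : f ∈ Hinf) : c • f ∈ Hinf := by
  obtain ⟨hfd, C, hC⟩ := hf
  refine ⟨hfd.const_smul c, ‖c‖ * C, fun z hz => ?_⟩
  rw [Pi.smul_apply, smul_eq_mul, norm_mul]
  exact mul_le_mul_of_nonneg_left (hC z hz) (norm_nonneg _)

lemma Hinf_one : (1 : ℂ → ℂ) ∈ Hinf :=
  ⟨differentiableOn_const 1, 1, fun z _ => by simp⟩

lemma Hinf_id : (fun z : ℂ => z) ∈ Hinf :=
  ⟨differentiable_id.differentiableOn, 1, fun z hz => by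
    simpa [D, Complex.dist_eq] using (mem_ball.mp hz).le⟩

lemma Hinf_zero : (0 : ℂ → ℂ) ∈ Hinf :=
  ⟨differentiableOn_const 0, 0, fun z _ => by simp⟩

lemma Hinf_dslope {f : ℂ → ℂ} {w : ℂ} (hf : f ∈ Hinf) (hw : w ∈ D) : dslope f w ∈ Hinf := by
  obtain ⟨hfd, C, hC⟩ := hf
  have hD : D ∈ 𝓝 w := D_open.mem_nhds hw
  have hd : DifferentiableOn ℂ (dslope f w) D := (differentiableOn_dslope hD).mpr hfd
  set ρ : ℝ := (1 - ‖w‖) / 2 with hρ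
  have habsw : ‖w‖ < 1 := by simpa [D, Complex.dist_eq] using mem_ball.mp hw
  have hρpos : 0 < ρ := by simp only [hρ]; linarith
  have hsub : closedBall w ρ ⊆ D := by
    intro x hx
    simp only [D, mem_ball, Complex.dist_eq, sub_zero]
    have h1 : ‖x - w‖ ≤ ρ := by simpa [Complex.dist_eq] using mem_closedBall.mp hx
    calc ‖x‖ ≤ ‖x - w‖ + ‖w‖ := by
          simpa using norm_add_le (x - w) w
      _ ≤ ρ + ‖w‖ := by linarith
      _ < 1 := by simp only [hρ]; linarith
  obtain ⟨M, hM⟩ := (isCompact_closedBall w ρ).exists_bound_of_continuousOn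
    ((hd.continuousOn).mono hsub)
  have hC0 : 0 ≤ C := le_trans (norm_nonneg _) (hC 0 zero_mem_D)
  refine ⟨hd, max M (2 * C / ρ), fun z hz => ?_⟩
  by_cases hzb : z ∈ closedBall w ρ
  · exact le_trans (by simpa using hM z hzb) (le_max_left _ _)
  · have hne : z ≠ w := by
      intro h; exact hzb (by simp [h, hρpos.le])
    have hdist : ρ ≤ ‖z - w‖ := by
      by_contra h
      exact hzb (mem_closedBall.mpr (by simpa [Complex.dist_eq] using (not_le.mp h).le))
    rw [dslope_of_ne f hne, slope_def_field, div_eq_inv_mul]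
    rw [norm_mul, norm_inv]
    have h1 : ‖f z - f w‖ ≤ 2 * C := by
      calc ‖f z - f w‖ ≤ ‖f z‖ + ‖f w‖ := by
            rw [sub_eq_add_neg]
            simpa using norm_add_le (f z) (-(f w))
        _ ≤ C + C := add_le_add (hC z hz) (hC w hw)
        _ = 2 * C := by ring
    refine le_trans ?_ (le_max_right _ _)
    rw [inv_mul_le_iff₀ (lt_of_lt_of_le hρpos hdist)]
    calc ‖f z - f w‖ ≤ 2 * C := h1
      _ = ρ * (2 * C / ρ) := by field_simp
      _ ≤ ‖z - w‖ * (2 * C / ρ) :=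
          mul_le_mul_of_nonneg_right hdist (by positivity)

lemma dslope_factor (f : ℂ → ℂ) (w z : ℂ) : f z = (z - w) * dslope f w z + f w := by
  have h := sub_smul_dslope f w z
  rw [smul_eq_mul] at h
  linear_combination -h


/-- `H^∞_0(𝔻) = {f ∈ H^∞(𝔻) : f 0 = 0}`. -/
def Hinf0 : Set (ℂ → ℂ) := {f | f ∈ Hinf ∧ f 0 = 0}

/-- The Neil algebra `H^∞_1(𝔻) = {f ∈ H^∞(𝔻) : f'(0) = 0}`. -/
def Hinf1 : Set (ℂ → ℂ) := {f | f ∈ Hinf ∧ deriv f 0 = 0}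

/-- `T` is an automorphism (bijective ℂ-linear multiplicative map) of the algebra of
holomorphic functions `A`, where two functions are identified when they agree on `D`. -/
def IsAlgAutOn (A : Set (ℂ → ℂ)) (T : (ℂ → ℂ) → (ℂ → ℂ)) : Prop :=
  (∀ f ∈ A, T f ∈ A) ∧
  (∀ f ∈ A, ∀ g ∈ A, Set.EqOn f g D → Set.EqOn (T f) (T g) D) ∧
  (∀ f ∈ A, ∀ g ∈ A, Set.EqOn (T (f + g)) (T f + T g) D) ∧
  (∀ (c : ℂ), ∀ f ∈ A, Set.EqOn (T (c • f)) (c • T f) D) ∧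
  (∀ f ∈ A, ∀ g ∈ A, Set.EqOn (T (f * g)) (T f * T g) D) ∧
  (∀ f ∈ A, ∀ g ∈ A, Set.EqOn (T f) (T g) D → Set.EqOn f g D) ∧
  (∀ g ∈ A, ∃ f ∈ A, Set.EqOn (T f) g D)

lemma exists_tau {T : (ℂ → ℂ) → (ℂ → ℂ)} (hT : IsAlgAutOn Hinf T) :
    ∃ τ : ℂ → ℂ, τ ∈ Hinf ∧ Set.MapsTo τ D D ∧ ∀ f ∈ Hinf, ∀ z ∈ D, T f z = f (τ z) := by
  obtain ⟨hmem, hcong, hadd, hsmul, hmul, hinj, hsurj⟩ := hT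
  set ζ : ℂ → ℂ := fun z => z with hζ
  set τ : ℂ → ℂ := T ζ with hτ
  have hτH : τ ∈ Hinf := hmem ζ Hinf_id
  -- T 1 = 1 on D
  have hT1 : ∀ z ∈ D, T 1 z = 1 := by
    intro z hz
    have hne : T 1 z ≠ 0 := by
      intro h0
      obtain ⟨f, hf, hTf⟩ := hsurj 1 Hinf_one
      have h1 := hmul f hf 1 Hinf_one hz
      rw [mul_one] at h1
      have h2 : T f z = 1 := hTf hz
      rw [h2, Pi.mul_apply, h2, h0, mul_zero] at h1
      exact one_ne_zero h1
    have h1 := hmul 1 Hinf_one 1 Hinf_one hz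
    rw [one_mul, Pi.mul_apply] at h1
    exact (mul_left_cancel₀ hne (by rw [← h1, mul_one])).symm
  -- T of constants
  have hTconst : ∀ (c : ℂ), ∀ z ∈ D, T (c • (1 : ℂ → ℂ)) z = c := by
    intro c z hz
    have := hsmul c 1 Hinf_one hz
    rw [this, Pi.smul_apply, hT1 z hz, smul_eq_mul, mul_one]
  -- T 0 = 0 on D
  have hT0 : ∀ z ∈ D, T 0 z = 0 := by
    intro z hz
    have := hTconst 0 z hz
    rwa [zero_smul] at this
  -- T (id - c) on D
  have hTsub : ∀ (c : ℂ), ∀ z ∈ D, T (ζ + (-c) • (1 : ℂ → ℂ)) z = τ z - c := by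
    intro c z hz
    have h1 := hadd ζ Hinf_id ((-c) • (1 : ℂ → ℂ)) (Hinf_smul _ Hinf_one) hz
    rw [h1, Pi.add_apply, hTconst (-c) z hz]
    show τ z + -c = τ z - c
    ring
  have hsubH : ∀ c : ℂ, (ζ + (-c) • (1 : ℂ → ℂ)) ∈ Hinf :=
    fun c => Hinf_add Hinf_id (Hinf_smul _ Hinf_one)
  -- |τ| ≤ 1 on D
  have hb1 : ∀ z ∈ D, ‖τ z‖ ≤ 1 := by
    intro z₀ h₀
    by_contra hgt
    push_neg at hgt
    set c : ℂ := τ z₀ with hc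
    set g : ℂ → ℂ := fun z => (z - c)⁻¹ with hg
    have hzc : ∀ z ∈ D, z - c ≠ 0 := by
      intro z hz h
      have : ‖z‖ < 1 := by simpa [D, Complex.dist_eq] using mem_ball.mp hz
      rw [sub_eq_zero] at h
      rw [h] at this
      linarith
    have hgH : g ∈ Hinf := by
      constructor
      · intro z hz
        exact (((differentiableAt_id.sub_const c).inv (hzc z hz)).differentiableWithinAt)
      · refine ⟨(‖c‖ - 1)⁻¹, fun z hz => ?_⟩
        have habs : ‖z‖ < 1 := by simpa [D, Complex.dist_eq] using mem_ball.mp hz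
        have h1 : ‖c‖ - 1 ≤ ‖z - c‖ := by
          have h2 : ‖c‖ - ‖z‖ ≤ ‖c - z‖ := by
            simpa using norm_sub_norm_le c z
          have h3 : ‖c - z‖ = ‖z - c‖ := norm_sub_rev c z
          linarith
        rw [hg, norm_inv]
        exact inv_anti₀ (by linarith) h1
    have heq1 : Set.EqOn ((ζ + (-c) • (1 : ℂ → ℂ)) * g) 1 D := by
      intro z hz
      simp only [Pi.mul_apply, Pi.add_apply, Pi.smul_apply, Pi.one_apply, smul_eq_mul,
        mul_one, Pi.one_apply, hg]
      show (z + -c) * (z - c)⁻¹ = 1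
      rw [← sub_eq_add_neg]
      field_simp [hzc z hz]
    have hmulH := Hinf_mul (hsubH c) hgH
    have h2 := hcong _ hmulH 1 Hinf_one heq1 h₀
    have h3 := hmul _ (hsubH c) g hgH h₀
    have h4 : (1 : ℂ) = (τ z₀ - c) * T g z₀ := by
      rw [← hT1 z₀ h₀, ← h2, h3, Pi.mul_apply, hTsub c z₀ h₀]
    rw [hc, sub_self, zero_mul] at h4
    exact one_ne_zero h4
  -- τ maps D into D
  have hmaps : Set.MapsTo τ D D := by
    intro z₀ h₀
    by_contra hout
    have habs : ‖τ z₀‖ = 1 := by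
      have h1 : ¬ ‖τ z₀‖ < 1 := by
        intro h; exact hout (by simpa [D, Complex.dist_eq] using h)
      have h2 := hb1 z₀ h₀
      linarith [not_lt.mp h1]
    have hmax : IsMaxOn (norm ∘ τ) D z₀ := by
      intro z hz
      simp only [Function.comp_apply, Set.mem_setOf_eq]
      rw [habs]
      exact hb1 z hz
    have hconst := Complex.eqOn_of_isPreconnected_of_isMaxOn_norm D_conn D_open hτH.1 h₀ hmax
    have hz : Set.EqOn (T (ζ + (-(τ z₀)) • (1 : ℂ → ℂ))) (T 0) D := by
      intro z hz
      rw [hTsub (τ z₀) z hz, hT0 z hz]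
      have h5 : τ z = τ z₀ := hconst hz
      rw [h5, sub_self]
    have h5 := hinj _ (hsubH (τ z₀)) 0 Hinf_zero hz
    have h6 := h5 zero_mem_D
    simp only [Pi.add_apply, Pi.smul_apply, Pi.one_apply, smul_eq_mul, mul_one,
      Pi.zero_apply, hζ] at h6
    have h7 : τ z₀ = 0 := by
      have : (0 : ℂ) + -(τ z₀) = 0 := h6
      linear_combination -this
    rw [h7] at habs
    simp at habs
  -- main identity
  refine ⟨τ, hτH, hmaps, ?_⟩
  intro f hf z hz
  have hw : τ z ∈ D := hmaps hz
  have hgH : dslope f (τ z) ∈ Hinf := Hinf_dslope hf hw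
  have heq : Set.EqOn f ((ζ + (-(τ z)) • (1 : ℂ → ℂ)) * dslope f (τ z) + (f (τ z)) • 1) D := by
    intro x hx
    simp only [Pi.add_apply, Pi.mul_apply, Pi.smul_apply, Pi.one_apply, smul_eq_mul,
      mul_one, hζ]
    linear_combination dslope_factor f (τ z) x
  have hprodH := Hinf_mul (hsubH (τ z)) hgH
  have hrhsH : ((ζ + (-(τ z)) • (1 : ℂ → ℂ)) * dslope f (τ z) + (f (τ z)) • 1) ∈ Hinf :=
    Hinf_add hprodH (Hinf_smul _ Hinf_one)
  have h1 := hcong f hf _ hrhsH heq hz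
  have h2 := hadd _ hprodH ((f (τ z)) • (1 : ℂ → ℂ)) (Hinf_smul _ Hinf_one) hz
  have h3 := hmul _ (hsubH (τ z)) (dslope f (τ z)) hgH hz
  rw [h1, h2, Pi.add_apply, h3, Pi.mul_apply, hTsub (τ z) z hz, hTconst (f (τ z)) z hz,
    sub_self, zero_mul, zero_add]

lemma invFunOn_differentiableOn {τ : ℂ → ℂ} (hd : DifferentiableOn ℂ τ D)
    (hb : Set.BijOn τ D D) : DifferentiableOn ℂ (Function.invFunOn τ D) D := by
  set σ := Function.invFunOn τ D with hσ
  have han : AnalyticOnNhd ℂ τ D := hd.analyticOnNhd D_open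
  have hinj := hb.injOn
  have hσinv : ∀ z ∈ D, σ (τ z) = z := fun z hz => hinj.leftInvOn_invFunOn hz
  -- τ is not locally constant
  have hnc : ∀ z₀ ∈ D, ¬ (∀ᶠ z in 𝓝 z₀, τ z = τ z₀) := by
    intro z₀ h₀ hev
    have hevD : ∀ᶠ z in 𝓝 z₀, z ∈ D := D_open.mem_nhds h₀
    have h1 : ∀ᶠ z in 𝓝[≠] z₀, τ z = τ z₀ ∧ z ∈ D :=
      eventually_nhdsWithin_of_eventually_nhds (hev.and hevD)
    have h2 : ∀ᶠ z in 𝓝[≠] z₀, z ≠ z₀ := eventually_mem_nhdsWithin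
    obtain ⟨z, ⟨hτz, hzD⟩, hne⟩ := (h1.and h2).exists
    exact hne (hinj hzD h₀ hτz)
  -- images of neighborhoods are neighborhoods
  have hopen : ∀ z₀ ∈ D, ∀ U ∈ 𝓝 z₀, τ '' U ∈ 𝓝 (τ z₀) := by
    intro z₀ h₀ U hU
    have h1 := (han z₀ h₀).eventually_constant_or_nhds_le_map_nhds.resolve_left (hnc z₀ h₀)
    exact h1 (image_mem_map hU)
  -- continuity of σ at points of D
  have hσcont : ∀ z₀ ∈ D, ContinuousAt σ (τ z₀) := by
    intro z₀ h₀
    have h1 : Filter.Tendsto σ (𝓝 (τ z₀)) (𝓝 z₀) := by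
      rw [Filter.tendsto_def]
      intro U hU
      have h2 : τ '' (U ∩ D) ∈ 𝓝 (τ z₀) :=
        hopen z₀ h₀ _ (Filter.inter_mem hU (D_open.mem_nhds h₀))
      refine Filter.mem_of_superset h2 ?_
      rintro w ⟨u, ⟨huU, huD⟩, rfl⟩
      show σ (τ u) ∈ U
      rw [hσinv u huD]
      exact huU
    have h3 : σ (τ z₀) = z₀ := hσinv z₀ h₀
    unfold ContinuousAt
    rw [h3]
    exact h1
  -- strict derivative
  have hstrict : ∀ z ∈ D, HasStrictDerivAt τ (deriv τ z) z := by
    intro z hz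
    obtain ⟨p, hp⟩ := han z hz
    have h1 := hp.hasStrictDerivAt
    have h2 := h1.hasDerivAt.deriv
    rw [h2]
    exact h1
  -- differentiability of σ at good points
  have hdiff_at : ∀ z ∈ D, deriv τ z ≠ 0 → DifferentiableAt ℂ σ (τ z) := by
    intro z hz h0
    have hg : ∀ᶠ x in 𝓝 z, σ (τ x) = x := by
      filter_upwards [D_open.mem_nhds hz] with x hx using hσinv x hx
    exact ((hstrict z hz).to_local_left_inverse h0 hg).hasDerivAt.differentiableAt
  have hderiv_an : AnalyticOnNhd ℂ (deriv τ) D := han.deriv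
  intro w hw
  obtain ⟨z, hz, rfl⟩ := hb.surjOn hw
  by_cases h0 : deriv τ z = 0
  · -- removable singularity
    have hev : ∀ᶠ x in 𝓝[≠] z, deriv τ x ≠ 0 := by
      rcases (hderiv_an z hz).eventually_eq_zero_or_eventually_ne_zero with h | h
      · exfalso
        rw [Metric.eventually_nhds_iff] at h
        obtain ⟨ε₀, hε₀, hball⟩ := h
        obtain ⟨ε₁, hε₁, hball₁⟩ := Metric.mem_nhds_iff.mp (D_open.mem_nhds hz)
        set ε := min ε₀ ε₁ with hε
        have hεpos : 0 < ε := lt_min hε₀ hε₁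
        have hsubD : ball z ε ⊆ D := fun x hx => hball₁ (ball_subset_ball (min_le_right _ _) hx)
        have hfd : ∀ x ∈ ball z ε, fderivWithin ℂ τ (ball z ε) x = 0 := by
          intro x hx
          have hx0 : deriv τ x = 0 := hball (lt_of_lt_of_le (mem_ball.mp hx) (min_le_left _ _))
          have hdx : DifferentiableAt ℂ τ x := by
            have := hd.differentiableAt (D_open.mem_nhds (hsubD hx))
            exact this
          have h1 : HasDerivAt τ 0 x := hx0 ▸ hdx.hasDerivAt
          have h2 : HasFDerivAt τ (0 : ℂ →L[ℂ] ℂ) x := by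
            have h3 := h1.hasFDerivAt
            have h4 : (ContinuousLinearMap.toSpanSingleton ℂ (0 : ℂ)) = 0 := by
              ext1; simp
            rwa [h4] at h3
          rw [fderivWithin_of_isOpen isOpen_ball hx]
          exact h2.fderiv
        have hmem2 : z + (ε : ℂ)/2 ∈ ball z ε := by
          rw [mem_ball, Complex.dist_eq]
          have he1 : z + (ε : ℂ)/2 - z = (ε : ℂ)/2 := by ring
          have he2 : ‖(ε : ℂ)/2‖ = ε/2 := by
            rw [norm_div, Complex.norm_real, Real.norm_of_nonneg hεpos.le]
            norm_num
          rw [he1, he2]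
          linarith
        have hconst := (convex_ball z ε).is_const_of_fderivWithin_eq_zero
          (hd.mono hsubD) hfd (mem_ball_self hεpos) hmem2
        have hinjc := hinj (hsubD (mem_ball_self hεpos)) (hsubD hmem2) hconst
        have : (ε:ℂ)/2 = 0 := by linear_combination -hinjc
        have : ε = 0 := by
          field_simp at this
          simpa using this
        linarith
      · exact h
    have hevD : ∀ᶠ x in 𝓝[≠] z, x ∈ D :=
      eventually_nhdsWithin_of_eventually_nhds (D_open.mem_nhds hz)
    obtain ⟨ε, hεpos, hεprop⟩ := Metric.eventually_nhds_iff.mp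
      (eventually_nhdsWithin_iff.mp (hev.and hevD))
    have himg : τ '' (ball z ε) ∈ 𝓝 (τ z) := hopen z hz _ (ball_mem_nhds z hεpos)
    have hpunct : ∀ᶠ w' in 𝓝[≠] (τ z), DifferentiableAt ℂ σ w' := by
      filter_upwards [mem_nhdsWithin_of_mem_nhds himg, eventually_mem_nhdsWithin]
        with w' hw' hne
      obtain ⟨u, hu, rfl⟩ := hw'
      have hune : u ≠ z := by rintro rfl; exact hne rfl
      obtain ⟨h1, h2⟩ := hεprop (mem_ball.mp hu) hune
      exact hdiff_at u h2 h1
    exact (Complex.analyticAt_of_differentiable_on_punctured_nhds_of_continuousAt hpunct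
      (hσcont z hz)).differentiableAt.differentiableWithinAt
  · exact (hdiff_at z hz h0).differentiableWithinAt

/-- A function in `H^∞(𝔻)` is inner if its radial boundary values have modulus one at almost
every boundary point. -/
def IsInner (φ : ℂ → ℂ) : Prop :=
  φ ∈ Hinf ∧ ∀ᵐ (θ : ℝ) ∂(volume : Measure ℝ),
    Filter.Tendsto (fun r : ℝ => ‖φ ((r : ℂ) * Complex.exp ((θ : ℂ) * Complex.I))‖)
      (nhdsWithin 1 (Set.Iio 1)) (nhds 1)

/-- A conformal automorphism of the unit disc: a bijective holomorphic self-map of `D`. -/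
def IsConfAut (τ : ℂ → ℂ) : Prop := DifferentiableOn ℂ τ D ∧ Set.BijOn τ D D

/-- (Bers, Rudin) A map `T : H^∞(𝔻) → H^∞(𝔻)` is an automorphism if and only if it is
composition with a conformal automorphism `τ` of the unit disc. -/
theorem automorphism_of_Hinf_iff (T : (ℂ → ℂ) → (ℂ → ℂ)) :
    IsAlgAutOn Hinf T ↔
      ∃ τ : ℂ → ℂ, IsConfAut τ ∧ ∀ f ∈ Hinf, ∀ z ∈ D, T f z = f (τ z) := by
  constructor
  · intro hT
    classical
    obtain ⟨τ, hτH, hτmaps, hτid⟩ := exists_tau hT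
    obtain ⟨hmem, hcong, hadd, hsmul, hmul, hinj, hsurj⟩ := hT
    set S : (ℂ → ℂ) → (ℂ → ℂ) := fun g => if h : g ∈ Hinf then (hsurj g h).choose else g
      with hS
    have hSspec : ∀ g (hg : g ∈ Hinf), S g ∈ Hinf ∧ Set.EqOn (T (S g)) g D := by
      intro g hg
      have h1 : S g = (hsurj g hg).choose := by rw [hS]; exact dif_pos hg
      rw [h1]
      obtain ⟨h2, h3⟩ := (hsurj g hg).choose_spec
      exact ⟨h2, h3⟩
    have hSaut : IsAlgAutOn Hinf S := by
      refine ⟨fun g hg => (hSspec g hg).1, ?_, ?_, ?_, ?_, ?_, ?_⟩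
      · intro g₁ hg₁ g₂ hg₂ heq
        exact hinj _ (hSspec g₁ hg₁).1 _ (hSspec g₂ hg₂).1
          (((hSspec g₁ hg₁).2.trans heq).trans (hSspec g₂ hg₂).2.symm)
      · intro g₁ hg₁ g₂ hg₂
        refine hinj _ (hSspec _ (Hinf_add hg₁ hg₂)).1 _
          (Hinf_add (hSspec g₁ hg₁).1 (hSspec g₂ hg₂).1) ?_
        intro z hz
        rw [(hSspec _ (Hinf_add hg₁ hg₂)).2 hz,
          hadd _ (hSspec g₁ hg₁).1 _ (hSspec g₂ hg₂).1 hz, Pi.add_apply, Pi.add_apply,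
          (hSspec g₁ hg₁).2 hz, (hSspec g₂ hg₂).2 hz]
      · intro c g hg
        refine hinj _ (hSspec _ (Hinf_smul c hg)).1 _ (Hinf_smul c (hSspec g hg).1) ?_
        intro z hz
        rw [(hSspec _ (Hinf_smul c hg)).2 hz, hsmul c _ (hSspec g hg).1 hz, Pi.smul_apply,
          Pi.smul_apply, (hSspec g hg).2 hz]
      · intro g₁ hg₁ g₂ hg₂
        refine hinj _ (hSspec _ (Hinf_mul hg₁ hg₂)).1 _
          (Hinf_mul (hSspec g₁ hg₁).1 (hSspec g₂ hg₂).1) ?_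
        intro z hz
        rw [(hSspec _ (Hinf_mul hg₁ hg₂)).2 hz,
          hmul _ (hSspec g₁ hg₁).1 _ (hSspec g₂ hg₂).1 hz, Pi.mul_apply, Pi.mul_apply,
          (hSspec g₁ hg₁).2 hz, (hSspec g₂ hg₂).2 hz]
      · intro g₁ hg₁ g₂ hg₂ heq z hz
        rw [← (hSspec g₁ hg₁).2 hz, ← (hSspec g₂ hg₂).2 hz]
        exact hcong _ (hSspec g₁ hg₁).1 _ (hSspec g₂ hg₂).1 heq hz
      · intro f hf
        exact ⟨T f, hmem f hf,
          hinj _ (hSspec _ (hmem f hf)).1 f hf (hSspec _ (hmem f hf)).2⟩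
    obtain ⟨τ', hτ'H, hτ'maps, hτ'id⟩ := exists_tau hSaut
    have hli : ∀ z ∈ D, τ' (τ z) = z := by
      intro z hz
      have h1 : T (S (fun x : ℂ => x)) z = (S (fun x : ℂ => x)) (τ z) :=
        hτid _ (hSspec _ Hinf_id).1 z hz
      have h2 : T (S (fun x : ℂ => x)) z = z := (hSspec _ Hinf_id).2 hz
      have h3 : S (fun x : ℂ => x) (τ z) = τ' (τ z) := hτ'id _ Hinf_id (τ z) (hτmaps hz)
      rw [h3] at h1
      rw [← h1, h2]
    have hri : ∀ z ∈ D, τ (τ' z) = z := by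
      intro z hz
      have h0 : Set.EqOn (S (T (fun x : ℂ => x))) (fun x : ℂ => x) D :=
        hinj _ (hSspec _ (hmem _ Hinf_id)).1 _ Hinf_id (hSspec _ (hmem _ Hinf_id)).2
      have h1 : S (T (fun x : ℂ => x)) z = (T (fun x : ℂ => x)) (τ' z) :=
        hτ'id _ (hmem _ Hinf_id) z hz
      have h2 : (T (fun x : ℂ => x)) (τ' z) = τ (τ' z) := hτid _ Hinf_id (τ' z) (hτ'maps hz)
      have h3 := h0 hz
      rw [h1, h2] at h3
      simpa using h3
    refine ⟨τ, ⟨hτH.1, hτmaps, ?_, ?_⟩, hτid⟩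
    · intro a ha b hb hab
      rw [← hli a ha, ← hli b hb, hab]
    · intro w hw
      exact ⟨τ' w, hτ'maps hw, hri w hw⟩
  · rintro ⟨τ, ⟨hdτ, hbτ⟩, hid⟩
    have hσd := invFunOn_differentiableOn hdτ hbτ
    set σ := Function.invFunOn τ D with hσ
    have hσinv : ∀ z ∈ D, σ (τ z) = z := fun z hz => hbτ.injOn.leftInvOn_invFunOn hz
    have hσmem : Set.MapsTo σ D D := by
      intro w hw
      obtain ⟨a, ha, hfa⟩ := hbτ.surjOn hw
      exact Function.invFunOn_mem ⟨a, ha, hfa⟩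
    refine ⟨?_, ?_, ?_, ?_, ?_, ?_, ?_⟩
    · intro f hf
      refine ⟨?_, ?_⟩
      · have h1 : DifferentiableOn ℂ (fun z => f (τ z)) D := hf.1.comp hdτ hbτ.mapsTo
        exact h1.congr (fun z hz => hid f hf z hz)
      · obtain ⟨C, hC⟩ := hf.2
        exact ⟨C, fun z hz => by rw [hid f hf z hz]; exact hC _ (hbτ.mapsTo hz)⟩
    · intro f hf g hg heq z hz
      rw [hid f hf z hz, hid g hg z hz]
      exact heq (hbτ.mapsTo hz)
    · intro f hf g hg z hz
      rw [hid _ (Hinf_add hf hg) z hz, Pi.add_apply, Pi.add_apply, hid f hf z hz,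
        hid g hg z hz]
    · intro c f hf z hz
      rw [hid _ (Hinf_smul c hf) z hz, Pi.smul_apply, Pi.smul_apply, hid f hf z hz]
    · intro f hf g hg z hz
      rw [hid _ (Hinf_mul hf hg) z hz, Pi.mul_apply, Pi.mul_apply, hid f hf z hz,
        hid g hg z hz]
    · intro f hf g hg heq z hz
      obtain ⟨u, hu, rfl⟩ := hbτ.surjOn hz
      have h1 := heq hu
      rwa [hid f hf u hu, hid g hg u hu] at h1
    · intro g hg
      have hfH : (fun z => g (σ z)) ∈ Hinf := by
        refine ⟨hg.1.comp hσd hσmem, ?_⟩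
        obtain ⟨C, hC⟩ := hg.2
        exact ⟨C, fun z hz => hC _ (hσmem hz)⟩
      refine ⟨fun z => g (σ z), hfH, ?_⟩
      intro z hz
      rw [hid _ hfH z hz]
      show g (σ (τ z)) = g z
      rw [hσinv z hz]
end
end

section
/- Let f₂, f₃ ∈ H^∞(𝔻) be nonzero functions with f₂³ = f₃². Then there exists τ ∈ H^∞(𝔻) such that τ² = f₂ and τ³ = f₃; in particular, every zero of f₂ has even multiplicity and the quotient f₃/f₂ extends to a holomorphic function on 𝔻. -/
open Set Metric Complex MeasureTheory Filter

noncomputable section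

open Topology in
/-- If `f₂, f₃ ∈ H^∞(𝔻)` are nonzero with `f₂³ = f₃²`, then there is `τ ∈ H^∞(𝔻)` with
`τ² = f₂` and `τ³ = f₃`; in particular the quotient `f₃ / f₂` extends to a holomorphic
function on `𝔻` (namely `τ`). -/
theorem exists_root_of_cube_eq_square (f₂ f₃ : ℂ → ℂ) (h₂ : f₂ ∈ Hinf) (h₃ : f₃ ∈ Hinf)
    (hn₂ : ¬ Set.EqOn f₂ 0 D) (hn₃ : ¬ Set.EqOn f₃ 0 D)
    (h : Set.EqOn (f₂ ^ 3) (f₃ ^ 2) D) :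
    ∃ τ ∈ Hinf, Set.EqOn (τ ^ 2) f₂ D ∧ Set.EqOn (τ ^ 3) f₃ D ∧
      ∀ z ∈ D, f₂ z ≠ 0 → τ z = f₃ z / f₂ z := by
  classical
  have hDopen : IsOpen D := isOpen_ball
  obtain ⟨hd₂, C₂, hC₂⟩ := h₂
  obtain ⟨hd₃, C₃, hC₃⟩ := h₃
  set τ : ℂ → ℂ := fun z => if f₂ z = 0 then 0 else f₃ z / f₂ z with hτdef
  have hsq : ∀ z ∈ D, τ z ^ 2 = f₂ z := by
    intro z hz
    by_cases hz2 : f₂ z = 0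
    · simp [τ, hz2]
    · have hh := h hz
      simp only [Pi.pow_apply] at hh
      simp only [τ, if_neg hz2]
      field_simp
      linear_combination -hh
  have hcube : ∀ z ∈ D, τ z ^ 3 = f₃ z := by
    intro z hz
    have hh := h hz
    simp only [Pi.pow_apply] at hh
    by_cases hz2 : f₂ z = 0
    · have : f₃ z ^ 2 = 0 := by rw [← hh, hz2]; ring
      have h3 : f₃ z = 0 := by
        exact pow_eq_zero_iff (by norm_num) |>.mp this
      simp [τ, hz2, h3]
    · simp only [τ, if_neg hz2]
      field_simp
      linear_combination -(f₃ z) * hh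
  have habs : ∀ z ∈ D, ‖τ z‖ = Real.sqrt (‖f₂ z‖) := by
    intro z hz
    have := hsq z hz
    have h1 : ‖f₂ z‖ = ‖τ z‖ ^ 2 := by
      rw [← this, norm_pow]
    rw [h1, Real.sqrt_sq (norm_nonneg _)]
  -- analyticity of f₂ on D
  have f₂a : AnalyticOnNhd ℂ f₂ D := hd₂.analyticOnNhd hDopen
  have hpre : IsPreconnected D := (convex_ball (0:ℂ) 1).isPreconnected
  have hne : ∀ z₀ ∈ D, ∀ᶠ z in 𝓝[≠] z₀, f₂ z ≠ 0 := by
    intro z₀ hz₀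
    rcases (f₂a z₀ hz₀).eventually_eq_zero_or_eventually_ne_zero with hc | hc
    · exact absurd (f₂a.eqOn_zero_of_preconnected_of_eventuallyEq_zero hpre hz₀ hc) hn₂
    · exact hc
  -- differentiability at points where f₂ ≠ 0
  have hUopen : IsOpen (D ∩ f₂ ⁻¹' {(0:ℂ)}ᶜ) :=
    hd₂.continuousOn.isOpen_inter_preimage hDopen isOpen_compl_singleton
  have hdiff_ne : ∀ z ∈ D, f₂ z ≠ 0 → DifferentiableAt ℂ τ z := by
    intro z hz hz2
    have hmem : (D ∩ f₂ ⁻¹' {(0:ℂ)}ᶜ) ∈ 𝓝 z := hUopen.mem_nhds ⟨hz, hz2⟩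
    have hev : τ =ᶠ[𝓝 z] fun w => f₃ w / f₂ w := by
      filter_upwards [hmem] with w hw
      have hw2 : f₂ w ≠ 0 := hw.2
      simp [τ, hw2]
    have hda : DifferentiableAt ℂ (fun w => f₃ w / f₂ w) z :=
      (hd₃.differentiableAt (hDopen.mem_nhds hz)).div
        (hd₂.differentiableAt (hDopen.mem_nhds hz)) hz2
    exact hda.congr_of_eventuallyEq hev
  have hdτ : DifferentiableOn ℂ τ D := by
    intro z₀ hz₀
    by_cases hz2 : f₂ z₀ = 0
    · have hcont : ContinuousAt τ z₀ := by
        have hτ0 : τ z₀ = 0 := by simp [τ, hz2]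
        rw [ContinuousAt, hτ0]
        have hg : Filter.Tendsto (fun z => Real.sqrt (‖f₂ z‖)) (nhds z₀) (nhds 0) := by
          have hc2 : ContinuousAt f₂ z₀ :=
            (hd₂.differentiableAt (hDopen.mem_nhds hz₀)).continuousAt
          have hct : ContinuousAt (fun z => Real.sqrt (‖f₂ z‖)) z₀ :=
            (Real.continuous_sqrt.continuousAt).comp
              ((continuous_norm.continuousAt).comp hc2)
          simpa [ContinuousAt, hz2] using hct
        refine squeeze_zero_norm' ?_ hg
        filter_upwards [hDopen.mem_nhds hz₀] with z hz
        exact le_of_eq (habs z hz)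
      have hpunct : ∀ᶠ z in 𝓝[≠] z₀, DifferentiableAt ℂ τ z := by
        have hDev : ∀ᶠ z in 𝓝[≠] z₀, z ∈ D :=
          eventually_nhdsWithin_of_eventually_nhds (hDopen.eventually_mem hz₀)
        filter_upwards [hne z₀ hz₀, hDev] with z h1 h2
        exact hdiff_ne z h2 h1
      exact ((Complex.analyticAt_of_differentiable_on_punctured_nhds_of_continuousAt
        hpunct hcont).differentiableAt).differentiableWithinAt
    · exact (hdiff_ne z₀ hz₀ hz2).differentiableWithinAt
  have hbd : ∀ z ∈ D, ‖τ z‖ ≤ Real.sqrt C₂ := by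
    intro z hz
    rw [habs z hz]
    exact Real.sqrt_le_sqrt (hC₂ z hz)
  refine ⟨τ, ⟨hdτ, Real.sqrt C₂, hbd⟩, ?_, ?_, ?_⟩
  · intro z hz; exact hsq z hz
  · intro z hz; exact hcube z hz
  · intro z hz hz2; simp [τ, hz2]
end
end
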